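/- arXiv:2004.12304 — 3 statements merged into one kernel-verified Lean document; each statement's English description precedes it below -/
import Mathlib

section
/- For integers $n \ge 1$ and $a$ with $1 \le a \le n$, we have $\sum_{i=2}^{a}\sum_{j=0}^{i-2}\binom{a}{i}\binom{n-a}{j}\frac{1}{n^{i+j}}\left(1-\frac{1}{n}\right)^{n-i-j} < \frac{a(a-1)}{n^2}$. -/
open Finset

theorem stmt_0 (n a : ℕ) (hn : 1 ≤ n) (ha2 : 2 ≤ a) (han : a ≤ n) :
    ∑ i ∈ Finset.Icc 2 a, ∑ j ∈ Finset.range (i - 1),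
      (a.choose i : ℝ) * ((n - a).choose j : ℝ) * (1 / (n : ℝ)) ^ (i + j) *
        (1 - 1 / (n : ℝ)) ^ (n - i - j)
      < (a : ℝ) * ((a : ℝ) - 1) / (n : ℝ) ^ 2 := by
  have hnR : (0:ℝ) < n := by exact_mod_cast Nat.lt_of_lt_of_le Nat.zero_lt_one hn
  set p : ℝ := 1 / (n:ℝ) with hpdef
  set q : ℝ := 1 - 1 / (n:ℝ) with hqdef
  have hp0 : 0 ≤ p := by positivity
  have hq0 : 0 ≤ q := by
    have h1 : (1:ℝ) ≤ n := by exact_mod_cast hn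
    exact sub_nonneg.mpr ((div_le_one hnR).mpr h1)
  have hpq : p + q = 1 := by rw [hpdef, hqdef]; ring
  -- reindex
  have hre : ∑ i ∈ Finset.Icc 2 a, ∑ j ∈ Finset.range (i - 1),
      (a.choose i : ℝ) * ((n - a).choose j : ℝ) * p ^ (i + j) * q ^ (n - i - j)
      = ∑ k ∈ Finset.range (a-1), ∑ j ∈ Finset.range (k+1),
      (a.choose (2+k) : ℝ) * ((n - a).choose j : ℝ) * p ^ ((2+k) + j) * q ^ (n - (2+k) - j) := by
    rw [show Finset.Icc 2 a = Finset.Ico 2 (a+1) by rw [Finset.Ico_add_one_right_eq_Icc],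
      Finset.sum_Ico_eq_sum_range]
    apply Finset.sum_congr (by congr 1 <;> omega)
    intro k _
    apply Finset.sum_congr (by congr 1 <;> omega)
    intro j _
    rfl
  rw [hre]
  -- per-term choose bound
  have hchoose : ∀ k ∈ Finset.range (a-1), (a.choose (2+k) : ℝ)
      ≤ (a.choose 2 : ℝ) * ((a-2).choose k : ℝ) := by
    intro k hk
    simp only [Finset.mem_range] at hk
    have h1 : a.choose (2+k) * (2+k).choose 2 = a.choose 2 * (a-2).choose k := by
      have := Nat.choose_mul (n := a) (k := 2+k) (s := 2) (by omega)
      simpa using this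
    have h2 : 1 ≤ (2+k).choose 2 := Nat.choose_pos (by omega)
    have : a.choose (2+k) ≤ a.choose 2 * (a-2).choose k := by
      calc a.choose (2+k) ≤ a.choose (2+k) * (2+k).choose 2 := Nat.le_mul_of_pos_right _ h2
        _ = a.choose 2 * (a-2).choose k := h1
    exact_mod_cast this
  have step1 : ∑ k ∈ Finset.range (a-1), ∑ j ∈ Finset.range (k+1),
      (a.choose (2+k) : ℝ) * ((n - a).choose j : ℝ) * p ^ ((2+k) + j) * q ^ (n - (2+k) - j)
      ≤ ∑ k ∈ Finset.range (a-1), ∑ j ∈ Finset.range (k+1),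
      ((a.choose 2 : ℝ) * ((a-2).choose k : ℝ)) * ((n - a).choose j : ℝ) * p ^ ((2+k) + j) * q ^ (n - (2+k) - j) := by
    apply Finset.sum_le_sum
    intro k hk
    apply Finset.sum_le_sum
    intro j _
    have := hchoose k hk
    have hnn : (0:ℝ) ≤ ((n - a).choose j : ℝ) * p ^ ((2+k) + j) * q ^ (n - (2+k) - j) := by
      positivity
    calc (a.choose (2+k) : ℝ) * ((n - a).choose j : ℝ) * p ^ ((2+k) + j) * q ^ (n - (2+k) - j)
        = (a.choose (2+k) : ℝ) * (((n - a).choose j : ℝ) * p ^ ((2+k) + j) * q ^ (n - (2+k) - j)) := by ring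
      _ ≤ ((a.choose 2 : ℝ) * ((a-2).choose k : ℝ)) * (((n - a).choose j : ℝ) * p ^ ((2+k) + j) * q ^ (n - (2+k) - j)) :=
          mul_le_mul_of_nonneg_right this hnn
      _ = ((a.choose 2 : ℝ) * ((a-2).choose k : ℝ)) * ((n - a).choose j : ℝ) * p ^ ((2+k) + j) * q ^ (n - (2+k) - j) := by ring
  -- extend inner sum
  have step2 : ∑ k ∈ Finset.range (a-1), ∑ j ∈ Finset.range (k+1),
      ((a.choose 2 : ℝ) * ((a-2).choose k : ℝ)) * ((n - a).choose j : ℝ) * p ^ ((2+k) + j) * q ^ (n - (2+k) - j)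
      ≤ ∑ k ∈ Finset.range (a-1), ∑ j ∈ Finset.range (n-a+1),
      ((a.choose 2 : ℝ) * ((a-2).choose k : ℝ)) * ((n - a).choose j : ℝ) * p ^ ((2+k) + j) * q ^ (n - (2+k) - j) := by
    apply Finset.sum_le_sum
    intro k _
    set M := max (k+1) (n-a+1) with hM
    have h1 : ∑ j ∈ Finset.range (n-a+1),
        ((a.choose 2 : ℝ) * ((a-2).choose k : ℝ)) * ((n - a).choose j : ℝ) * p ^ ((2+k) + j) * q ^ (n - (2+k) - j)
        = ∑ j ∈ Finset.range M,
        ((a.choose 2 : ℝ) * ((a-2).choose k : ℝ)) * ((n - a).choose j : ℝ) * p ^ ((2+k) + j) * q ^ (n - (2+k) - j) := by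
      apply Finset.sum_subset (Finset.range_subset_range.mpr (le_max_right _ _))
      intro j _ hj
      simp only [Finset.mem_range, not_lt] at hj
      have : (n - a).choose j = 0 := Nat.choose_eq_zero_of_lt (by omega)
      simp [this]
    rw [h1]
    apply Finset.sum_le_sum_of_subset_of_nonneg (Finset.range_subset_range.mpr (le_max_left _ _))
    intro j _ _
    positivity
  -- evaluate extended sum
  have step3 : ∑ k ∈ Finset.range (a-1), ∑ j ∈ Finset.range (n-a+1),
      ((a.choose 2 : ℝ) * ((a-2).choose k : ℝ)) * ((n - a).choose j : ℝ) * p ^ ((2+k) + j) * q ^ (n - (2+k) - j)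
      = (a.choose 2 : ℝ) * p ^ 2 := by
    have hsplit : ∀ k ∈ Finset.range (a-1), ∀ j ∈ Finset.range (n-a+1),
        ((a.choose 2 : ℝ) * ((a-2).choose k : ℝ)) * ((n - a).choose j : ℝ) * p ^ ((2+k) + j) * q ^ (n - (2+k) - j)
        = (a.choose 2 : ℝ) * p ^ 2 *
          ((((a-2).choose k : ℝ)) * p ^ k * q ^ ((a-2) - k) *
           (((n - a).choose j : ℝ) * p ^ j * q ^ ((n-a) - j))) := by
      intro k hk j hj
      simp only [Finset.mem_range] at hk hj
      have e1 : p ^ ((2+k) + j) = p ^ 2 * p ^ k * p ^ j := by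
        rw [← pow_add, ← pow_add]
      have e2 : q ^ (n - (2+k) - j) = q ^ ((a-2) - k) * q ^ ((n-a) - j) := by
        rw [← pow_add]; congr 1; omega
      rw [e1, e2]; ring
    rw [Finset.sum_congr rfl fun k hk => Finset.sum_congr rfl (hsplit k hk)]
    simp only [← Finset.mul_sum, ← Finset.sum_mul]
    have hb1 : ∑ k ∈ Finset.range (a-1), (((a-2).choose k : ℝ)) * p ^ k * q ^ ((a-2) - k) = 1 := by
      have h := add_pow p q (a-2)
      rw [hpq, one_pow] at h
      rw [show a - 1 = (a-2) + 1 by omega]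
      calc ∑ k ∈ Finset.range ((a-2)+1), (((a-2).choose k : ℝ)) * p ^ k * q ^ ((a-2) - k)
          = ∑ k ∈ Finset.range ((a-2)+1), p ^ k * q ^ ((a-2) - k) * (((a-2).choose k : ℝ)) :=
            Finset.sum_congr rfl fun k _ => by ring
        _ = 1 := h.symm
    have hb2 : ∑ j ∈ Finset.range (n-a+1), (((n - a).choose j : ℝ)) * p ^ j * q ^ ((n-a) - j) = 1 := by
      have h := add_pow p q (n-a)
      rw [hpq, one_pow] at h
      calc ∑ j ∈ Finset.range ((n-a)+1), (((n-a).choose j : ℝ)) * p ^ j * q ^ ((n-a) - j)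
          = ∑ j ∈ Finset.range ((n-a)+1), p ^ j * q ^ ((n-a) - j) * (((n-a).choose j : ℝ)) :=
            Finset.sum_congr rfl fun j _ => by ring
        _ = 1 := h.symm
    rw [hb1, hb2]; ring
  -- final comparison
  have hfin : (a.choose 2 : ℝ) * p ^ 2 < (a : ℝ) * ((a : ℝ) - 1) / (n : ℝ) ^ 2 := by
    rw [Nat.cast_choose_two, hpdef]
    have ha1 : (2:ℝ) ≤ a := by exact_mod_cast ha2
    have hpos : 0 < (a : ℝ) * ((a : ℝ) - 1) := by nlinarith
    rw [div_pow, one_pow]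
    rw [div_mul_div_comm, div_lt_div_iff₀ (by positivity) (by positivity)]
    have hn2 : (0:ℝ) < (n:ℝ)^2 := by positivity
    nlinarith [mul_pos hpos hn2]
  calc _ ≤ _ := step1
    _ ≤ _ := step2
    _ = _ := step3
    _ < _ := hfin
end

section
/- For integers $n \ge 2$ and $a$ with $1 \le a \le n$, $\sum_{i=1}^{a}\sum_{j=0}^{i-1}\binom{a}{i}\binom{n-a}{j}\frac{1}{n^{i+j}}\left(1-\frac{1}{n}\right)^{n-i-j} \ge \frac{a}{n}\left(1-\frac{1}{n}\right)^{n-1} > \frac{a}{en}$. -/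
open Finset

theorem stmt_1 (n a : ℕ) (hn : 2 ≤ n) (ha1 : 1 ≤ a) (han : a ≤ n) :
    (∑ i ∈ Finset.Icc 1 a, ∑ j ∈ Finset.range i,
      (a.choose i : ℝ) * ((n - a).choose j : ℝ) * (1 / (n : ℝ)) ^ (i + j) *
        (1 - 1 / (n : ℝ)) ^ (n - i - j)
      ≥ ((a : ℝ) / n) * (1 - 1 / (n : ℝ)) ^ (n - 1))
    ∧ ((a : ℝ) / n) * (1 - 1 / (n : ℝ)) ^ (n - 1) > (a : ℝ) / (Real.exp 1 * n) := by
  have hn0 : (0:ℝ) < n := by positivity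
  have hn2 : (2:ℝ) ≤ n := by exact_mod_cast hn
  have hx0 : (0:ℝ) < 1 - 1/n := by
    rw [sub_pos, div_lt_one hn0]; linarith
  constructor
  · have key : ∀ i ∈ Finset.Icc 1 a, (0:ℝ) ≤ ∑ j ∈ Finset.range i,
        (a.choose i : ℝ) * ((n - a).choose j : ℝ) * (1 / (n : ℝ)) ^ (i + j) *
        (1 - 1 / (n : ℝ)) ^ (n - i - j) := by
      intro i _
      apply Finset.sum_nonneg
      intro j _
      positivity
    have h1 : (1:ℕ) ∈ Finset.Icc 1 a := by simp [ha1]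
    refine le_trans ?_ (Finset.single_le_sum key h1)
    simp [Nat.choose_one_right]
    ring_nf
    try exact le_rfl
  · have hm0 : (0:ℝ) < (n:ℝ) - 1 := by linarith
    have hcast : ((n-1:ℕ):ℝ) = (n:ℝ) - 1 := by
      push_cast [Nat.one_le_of_lt hn]; ring
    have hm1 : n - 1 ≠ 0 := by omega
    have hlt : 1 + 1/((n:ℝ)-1) < Real.exp (1/((n:ℝ)-1)) := by
      rw [add_comm]
      exact Real.add_one_lt_exp (by positivity)
    have hpow : ((1 - 1/(n:ℝ))⁻¹)^(n-1) < Real.exp 1 := by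
      have h2 : (1 - 1/(n:ℝ))⁻¹ = 1 + 1/((n:ℝ)-1) := by
        field_simp
        ring
      rw [h2]
      calc (1 + 1/((n:ℝ)-1))^(n-1) < (Real.exp (1/((n:ℝ)-1)))^(n-1) := by
            apply pow_lt_pow_left₀ hlt (by positivity) hm1
        _ = Real.exp 1 := by
            rw [← Real.exp_nat_mul]; congr 1; rw [hcast]; field_simp
    rw [inv_pow] at hpow
    have hinv : (Real.exp 1)⁻¹ < (1 - 1/(n:ℝ))^(n-1) := by
      have hp : (0:ℝ) < (1 - 1/(n:ℝ))^(n-1) := by positivity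
      exact inv_lt_of_inv_lt₀ hp hpow
    have ha0 : (0:ℝ) < (a:ℝ)/n := by
      have : (0:ℝ) < a := by exact_mod_cast ha1
      positivity
    have : (a:ℝ)/(Real.exp 1 * n) = (a:ℝ)/n * (Real.exp 1)⁻¹ := by
      rw [mul_comm (Real.exp 1), div_mul_eq_div_div, div_eq_mul_inv]
    rw [this]
    exact mul_lt_mul_of_pos_left hinv ha0
end

section
/- Let $X \in \{0,1\}^n$ have exactly $a$ zeros where $1 \le a \le n$, and let $Y$ be obtained from $X$ by independently flipping each bit with probability $1/n$. Let $|X|, |Y|$ denote the number of ones. Then the conditional probability $\Pr[|Y| - |X| = 1 \mid |Y| > |X|] > 1 - \frac{ea}{n}$. -/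
open Finset MeasureTheory ProbabilityTheory
open scoped ENNReal

private lemma measAll {n : ℕ} (s : Set (Fin n → Bool)) : MeasurableSet s := by
  rw [show s = ⋃ f ∈ s, {f} by simp]
  exact MeasurableSet.biUnion (Set.to_countable _) (fun f _ => measurableSet_singleton f)

private lemma expBound (n : ℕ) (hn : 2 ≤ n) : 1 ≤ Real.exp 1 * (1 - 1/(n:ℝ))^(n-1) := by
  have hn1 : (1:ℝ) < n := by exact_mod_cast Nat.lt_of_lt_of_le one_lt_two hn
  have hm : (0:ℝ) < (n:ℝ) - 1 := by linarith
  have key : ((n:ℝ)/((n:ℝ)-1))^(n-1) ≤ Real.exp 1 := by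
    have h1 : (n:ℝ)/((n:ℝ)-1) = 1 + 1/((n:ℝ)-1) := by field_simp; ring
    have h2 : (1:ℝ) + 1/((n:ℝ)-1) ≤ Real.exp (1/((n:ℝ)-1)) := by
      have := Real.add_one_le_exp (1/((n:ℝ)-1)); linarith
    calc ((n:ℝ)/((n:ℝ)-1))^(n-1) ≤ (Real.exp (1/((n:ℝ)-1)))^(n-1) := by
          apply pow_le_pow_left₀ (by positivity) (by rw [h1]; exact h2)
      _ = Real.exp ((n-1 : ℕ) * (1/((n:ℝ)-1))) := by rw [← Real.exp_nat_mul]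
      _ = Real.exp 1 := by
          congr 1
          have : ((n-1 : ℕ):ℝ) = (n:ℝ) - 1 := by
            push_cast [Nat.cast_sub (le_trans one_le_two hn)]; ring
          rw [this]; field_simp
  have hpow : (1 - 1/(n:ℝ)) = (((n:ℝ)-1)/n) := by field_simp
  have hprod : ((n:ℝ)/((n:ℝ)-1))^(n-1) * (((n:ℝ)-1)/(n:ℝ))^(n-1) = 1 := by
    rw [← mul_pow]
    rw [show (n:ℝ)/((n:ℝ)-1) * (((n:ℝ)-1)/(n:ℝ)) = 1 by field_simp]
    exact one_pow _
  rw [hpow]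
  nlinarith [pow_pos (by positivity : (0:ℝ) < ((n:ℝ)-1)/n) (n-1), key, Real.exp_pos 1]

theorem stmt_2 (n a : ℕ) (hn : 2 ≤ n) (ha : 1 ≤ a) (han : a ≤ n)
    (X : Fin n → Bool)
    (hX : (Finset.univ.filter fun i => X i = false).card = a)
    (hp : (1 : ℝ≥0∞) / n ≤ 1) :
    (((Measure.pi fun _ : Fin n => (PMF.bernoulli ((1 : ℝ≥0∞) / n).toNNReal
        ((ENNReal.toNNReal_mono ENNReal.one_ne_top hp).trans_eq ENNReal.toNNReal_one)).toMeasure)[|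
        {f : Fin n → Bool |
          (Finset.univ.filter fun i => xor (X i) (f i) = true).card >
            (Finset.univ.filter fun i => X i = true).card}])
      {f : Fin n → Bool |
        (Finset.univ.filter fun i => xor (X i) (f i) = true).card =
          (Finset.univ.filter fun i => X i = true).card + 1})
    > ENNReal.ofReal (1 - Real.exp 1 * (a : ℝ) / (n : ℝ)) := by
  classical
  set μi := (PMF.bernoulli ((1 : ℝ≥0∞) / n).toNNReal
        ((ENNReal.toNNReal_mono ENNReal.one_ne_top hp).trans_eq ENNReal.toNNReal_one)).toMeasure with hμidef
  set μ := Measure.pi fun _ : Fin n => μi with hμdef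
  set q : ℝ≥0∞ := (1:ℝ≥0∞)/n with hqdef
  haveI : IsProbabilityMeasure μi := PMF.toMeasure.isProbabilityMeasure _
  haveI : IsProbabilityMeasure μ := by rw [hμdef]; infer_instance
  -- basic one-coordinate values
  have hμtrue : μi {true} = q := by
    rw [hμidef, PMF.toMeasure_apply_singleton _ _ (measurableSet_singleton _)]
    simp [PMF.bernoulli]
    rw [hqdef, one_div]
    rw [ENNReal.coe_inv (Nat.cast_ne_zero.mpr (by omega)), ENNReal.coe_natCast]
  have hμfalse : μi {false} = 1 - q := by
    rw [hμidef, PMF.toMeasure_apply_singleton _ _ (measurableSet_singleton _)]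
    simp [PMF.bernoulli]
    rw [hqdef, one_div]
    rw [ENNReal.coe_inv (Nat.cast_ne_zero.mpr (by omega)), ENNReal.coe_natCast]
  -- real number abbreviations
  have hnR : (2:ℝ) ≤ (n:ℝ) := by exact_mod_cast hn
  have hnpos : (0:ℝ) < n := by linarith
  have h1n : (1:ℝ)/n ≤ 1/2 := by
    rw [div_le_div_iff₀ hnpos (by norm_num)]; linarith
  have h1n' : (0:ℝ) < 1 - 1/n := by linarith
  have haR : (1:ℝ) ≤ a := by exact_mod_cast ha
  -- q as ofReal
  have hq : q = ENNReal.ofReal (1/(n:ℝ)) := by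
    rw [hqdef, ENNReal.ofReal_div_of_pos hnpos, ENNReal.ofReal_one, ENNReal.ofReal_natCast]
  have h1q : 1 - q = ENNReal.ofReal (1 - 1/(n:ℝ)) := by
    rw [ENNReal.ofReal_sub _ (by positivity), ENNReal.ofReal_one, ← hq]
  -- counting lemmas
  set Z : (Fin n → Bool) → ℕ :=
    fun f => (Finset.univ.filter fun i => X i = false ∧ f i = true).card with hZdef
  set W : (Fin n → Bool) → ℕ :=
    fun f => (Finset.univ.filter fun i => X i = true ∧ f i = true).card with hWdef
  set V : (Fin n → Bool) → ℕ :=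
    fun f => (Finset.univ.filter fun i => X i = true ∧ f i = false).card with hVdef
  have hsplit1 : ∀ f : Fin n → Bool,
      (Finset.univ.filter fun i => xor (X i) (f i) = true).card = Z f + V f := by
    intro f
    rw [hZdef, hVdef, ← Finset.card_union_of_disjoint]
    · congr 1
      ext i
      cases hx : X i <;> cases hf : f i <;> simp [hx, hf]
    · rw [Finset.disjoint_left]
      intro i h1 h2
      simp only [mem_filter] at h1 h2
      rw [h1.2.1] at h2; exact Bool.false_ne_true h2.2.1
  have hsplit2 : ∀ f : Fin n → Bool,
      (Finset.univ.filter fun i => X i = true).card = W f + V f := by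
    intro f
    rw [hWdef, hVdef, ← Finset.card_union_of_disjoint]
    · congr 1
      ext i
      cases hx : X i <;> cases hf : f i <;> simp [hx, hf]
    · rw [Finset.disjoint_left]
      intro i h1 h2
      simp only [mem_filter] at h1 h2
      rw [h1.2.2] at h2; simp at h2
  -- the events
  set C : Set (Fin n → Bool) :=
    {f : Fin n → Bool |
      (Finset.univ.filter fun i => xor (X i) (f i) = true).card >
        (Finset.univ.filter fun i => X i = true).card} with hCdef
  set E : Set (Fin n → Bool) :=
    {f : Fin n → Bool |
      (Finset.univ.filter fun i => xor (X i) (f i) = true).card =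
        (Finset.univ.filter fun i => X i = true).card + 1} with hEdef
  have hCiff : ∀ f, f ∈ C ↔ W f < Z f := by
    intro f
    rw [hCdef, Set.mem_setOf_eq, gt_iff_lt, hsplit1 f, hsplit2 f]
    omega
  have hEiff : ∀ f, f ∈ E ↔ Z f = W f + 1 := by
    intro f
    rw [hEdef, Set.mem_setOf_eq, hsplit1 f, hsplit2 f]
    omega
  have hEC : E ⊆ C := by
    intro f hf
    rw [hCiff]
    rw [hEiff] at hf
    omega
  -- the zero set
  set A : Finset (Fin n) := Finset.univ.filter (fun i => X i = false) with hAdef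
  have hAcard : A.card = a := hX
  -- single-flip functions
  set δ : Fin n → (Fin n → Bool) := fun i j => decide (j = i) with hδdef
  have hδE : ∀ i ∈ A, δ i ∈ E := by
    intro i hi
    have hXi : X i = false := (Finset.mem_filter.mp hi).2
    rw [hEiff]
    have hZ : Z (δ i) = 1 := by
      simp only [hZdef]
      rw [show (Finset.univ.filter fun j => X j = false ∧ δ i j = true) = {i} from ?_]
      · exact Finset.card_singleton i
      · ext j
        simp only [mem_filter, mem_univ, true_and, mem_singleton, hδdef,
          decide_eq_true_eq]
        constructor
        · exact fun h => h.2
        · rintro rfl; exact ⟨hXi, rfl⟩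
    have hW : W (δ i) = 0 := by
      simp only [hWdef]
      rw [Finset.card_eq_zero]
      ext j
      simp only [mem_filter, mem_univ, true_and, hδdef, decide_eq_true_eq,
        Finset.notMem_empty, iff_false, not_and]
      rintro hXj rfl
      rw [hXi] at hXj; exact Bool.false_ne_true hXj
    omega
  -- measure of a single-flip singleton
  have hμδ : ∀ i : Fin n, μ {δ i} = q * (1-q)^(n-1) := by
    intro i
    rw [show ({δ i} : Set (Fin n → Bool)) = Set.univ.pi (fun j => {δ i j}) from ?_]
    · rw [hμdef, Measure.pi_pi]
      rw [← Finset.prod_mul_prod_compl ({i} : Finset (Fin n))]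
      have h1 : ∏ j ∈ ({i} : Finset (Fin n)), μi {δ i j} = q := by
        rw [Finset.prod_singleton, show δ i i = true by simp [hδdef], hμtrue]
      have h2 : ∏ j ∈ ({i} : Finset (Fin n))ᶜ, μi {δ i j} = (1-q)^(n-1) := by
        have hconst : ∀ j ∈ ({i} : Finset (Fin n))ᶜ, μi {δ i j} = 1 - q := by
          intro j hj
          have hj' : j ≠ i := by simpa using hj
          rw [show δ i j = false by simp [hδdef, hj'], hμfalse]
        rw [Finset.prod_congr rfl hconst, Finset.prod_const, Finset.card_compl,
          Finset.card_singleton, Fintype.card_fin]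
      rw [h1, h2]
    · ext g; simp [funext_iff, eq_comm]
  -- lower bound on μ E
  have hlowE : ENNReal.ofReal ((a:ℝ) * (1/(n:ℝ) * (1 - 1/(n:ℝ))^(n-1))) ≤ μ E := by
    have hsub : (⋃ i ∈ A, ({δ i} : Set (Fin n → Bool))) ⊆ E := by
      intro f hf
      obtain ⟨i, hi, hfi⟩ := Set.mem_iUnion₂.mp hf
      rw [Set.mem_singleton_iff] at hfi
      subst hfi
      exact hδE i hi
    have hdisj : (↑A : Set (Fin n)).PairwiseDisjoint
        (fun i => ({δ i} : Set (Fin n → Bool))) := by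
      intro i _ j _ hij
      simp only [Function.onFun, Set.disjoint_singleton]
      intro h
      have := congrFun h i
      simp [hδdef] at this
      exact hij this
    have hmeas : μ (⋃ i ∈ A, ({δ i} : Set (Fin n → Bool)))
        = (a : ℝ≥0∞) * (q * (1-q)^(n-1)) := by
      rw [measure_biUnion_finset hdisj (fun _ _ => measAll _)]
      rw [Finset.sum_congr rfl (fun i _ => hμδ i), Finset.sum_const, hAcard,
        nsmul_eq_mul]
    have hconv : (a : ℝ≥0∞) * (q * (1-q)^(n-1))
        = ENNReal.ofReal ((a:ℝ) * (1/(n:ℝ) * (1 - 1/(n:ℝ))^(n-1))) := by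
      rw [h1q, hq, ← ENNReal.ofReal_pow (by linarith), ← ENNReal.ofReal_mul (by positivity),
        ← ENNReal.ofReal_natCast a, ← ENNReal.ofReal_mul (by positivity)]
    calc ENNReal.ofReal ((a:ℝ) * (1/(n:ℝ) * (1 - 1/(n:ℝ))^(n-1)))
        = μ (⋃ i ∈ A, ({δ i} : Set (Fin n → Bool))) := by rw [hmeas, hconv]
      _ ≤ μ E := measure_mono hsub
  have hEpos : μ E ≠ 0 := by
    intro h0
    rw [h0] at hlowE
    have : (0:ℝ) < (a:ℝ) * (1/(n:ℝ) * (1 - 1/(n:ℝ))^(n-1)) := by positivity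
    exact absurd (le_antisymm hlowE (zero_le)) (by
      rw [ENNReal.ofReal_eq_zero]; exact this.not_ge)
  -- upper bound on μ (C \ E)
  have hupper : μ (C \ E) ≤ ((a*a - a : ℕ) : ℝ≥0∞) * q^2 := by
    have hsub : C \ E ⊆ ⋃ p ∈ A.offDiag,
        {f : Fin n → Bool | f p.1 = true ∧ f p.2 = true} := by
      intro f hf
      obtain ⟨hfC, hfE⟩ := hf
      have hz2 : 2 ≤ Z f := by
        have h1 := (hCiff f).mp hfC
        have h2 : ¬ (Z f = W f + 1) := fun h => hfE ((hEiff f).mpr h)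
        omega
      obtain ⟨i, hi, j, hj, hij⟩ := Finset.one_lt_card.mp (by omega : 1 < Z f)
      simp only [mem_filter, mem_univ, true_and] at hi hj
      refine Set.mem_iUnion₂.mpr ⟨(i, j), Finset.mem_offDiag.mpr ⟨?_, ?_, hij⟩, ⟨hi.2, hj.2⟩⟩
      · exact Finset.mem_filter.mpr ⟨Finset.mem_univ _, hi.1⟩
      · exact Finset.mem_filter.mpr ⟨Finset.mem_univ _, hj.1⟩
    have hcyl : ∀ p ∈ A.offDiag,
        μ {f : Fin n → Bool | f p.1 = true ∧ f p.2 = true} ≤ q^2 := by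
      intro p hp'
      have hij : p.1 ≠ p.2 := (Finset.mem_offDiag.mp hp').2.2
      have hsub2 : {f : Fin n → Bool | f p.1 = true ∧ f p.2 = true} ⊆
          Set.univ.pi (fun k => if k = p.1 ∨ k = p.2 then ({true}:Set Bool) else Set.univ) := by
        intro f hf k _
        by_cases h : k = p.1 ∨ k = p.2
        · simp only [h, if_true]
          rcases h with h | h <;> subst h <;> simp [hf.1, hf.2]
        · simp [h]
      calc μ {f : Fin n → Bool | f p.1 = true ∧ f p.2 = true}
          ≤ μ (Set.univ.pi (fun k => if k = p.1 ∨ k = p.2 then ({true}:Set Bool) else Set.univ)) :=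
            measure_mono hsub2
        _ = ∏ k, μi (if k = p.1 ∨ k = p.2 then ({true}:Set Bool) else Set.univ) := by
            rw [hμdef, Measure.pi_pi]
        _ = q^2 := by
            rw [← Finset.prod_mul_prod_compl ({p.1, p.2} : Finset (Fin n))]
            have h1 : ∏ k ∈ ({p.1, p.2} : Finset (Fin n)),
                μi (if k = p.1 ∨ k = p.2 then ({true}:Set Bool) else Set.univ) = q^2 := by
              rw [Finset.prod_pair hij]
              simp [hμtrue, sq]
            have h2 : ∏ k ∈ ({p.1, p.2} : Finset (Fin n))ᶜ,
                μi (if k = p.1 ∨ k = p.2 then ({true}:Set Bool) else Set.univ) = 1 := by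
              apply Finset.prod_eq_one
              intro k hk
              simp only [Finset.mem_compl, Finset.mem_insert, Finset.mem_singleton] at hk
              push_neg at hk
              rw [if_neg (by tauto)]; exact measure_univ
            rw [h1, h2, mul_one]
    calc μ (C \ E) ≤ μ (⋃ p ∈ A.offDiag, {f : Fin n → Bool | f p.1 = true ∧ f p.2 = true}) :=
          measure_mono hsub
      _ ≤ ∑ p ∈ A.offDiag, μ {f : Fin n → Bool | f p.1 = true ∧ f p.2 = true} :=
          measure_biUnion_finset_le _ _
      _ ≤ ∑ _p ∈ A.offDiag, q^2 := Finset.sum_le_sum hcyl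
      _ = ((a*a - a : ℕ) : ℝ≥0∞) * q^2 := by
          rw [Finset.sum_const, nsmul_eq_mul, Finset.offDiag_card, hAcard]
  -- measure splitting
  have hμC : μ C = μ E + μ (C \ E) := by
    rw [← measure_union (Set.disjoint_sdiff_right) (measAll _), Set.union_diff_cancel hEC]
  have hCpos : μ C ≠ 0 := by
    intro h0
    exact hEpos (le_antisymm (h0 ▸ measure_mono hEC) (zero_le))
  -- rewrite the goal
  rw [gt_iff_lt, cond_apply (measAll C) μ E, Set.inter_eq_self_of_subset_right hEC,
    ← ENNReal.div_eq_inv_mul]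
  rcases le_or_gt (n:ℝ) (Real.exp 1 * a) with hcase | hcase
  · rw [ENNReal.ofReal_eq_zero.mpr (by
      rw [sub_nonpos, le_div_iff₀ hnpos, one_mul]; exact hcase)]
    exact ENNReal.div_pos hEpos (measure_ne_top μ C)
  · rw [ENNReal.lt_div_iff_mul_lt (Or.inl hCpos) (Or.inl (measure_ne_top μ C))]
    set r := ENNReal.ofReal (1 - Real.exp 1 * (a:ℝ) / (n:ℝ)) with hrdef
    set t := ENNReal.ofReal (Real.exp 1 * (a:ℝ) / (n:ℝ)) with htdef
    have hx0 : (0:ℝ) ≤ Real.exp 1 * (a:ℝ) / (n:ℝ) := by positivity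
    have hx1 : Real.exp 1 * (a:ℝ) / (n:ℝ) < 1 := by
      rw [div_lt_one hnpos]; exact hcase
    have hrt : r + t = 1 := by
      rw [hrdef, htdef, ← ENNReal.ofReal_add (by linarith) hx0]
      norm_num
    have hr1 : r ≤ 1 := ENNReal.ofReal_le_one.mpr (by linarith)
    have key : r * μ (C \ E) < t * μ E := by
      have hcast : ((a*a - a : ℕ) : ℝ) = (a:ℝ)*(a:ℝ) - (a:ℝ) := by
        push_cast [Nat.cast_sub (Nat.le_mul_of_pos_left a ha)]
        ring
      have hstep1 : r * μ (C \ E) ≤ ENNReal.ofReal (((a:ℝ)*(a:ℝ) - (a:ℝ)) * (1/(n:ℝ))^2) := by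
        calc r * μ (C \ E) ≤ 1 * μ (C \ E) := mul_le_mul_left hr1 _
          _ = μ (C \ E) := one_mul _
          _ ≤ ((a*a - a : ℕ) : ℝ≥0∞) * q^2 := hupper
          _ = ENNReal.ofReal (((a:ℝ)*(a:ℝ) - (a:ℝ)) * (1/(n:ℝ))^2) := by
              rw [hq, ← ENNReal.ofReal_pow (by positivity),
                ← ENNReal.ofReal_natCast (a*a - a), ← ENNReal.ofReal_mul (by positivity),
                hcast]
      have hstep2 : ENNReal.ofReal (((a:ℝ)*(a:ℝ) - (a:ℝ)) * (1/(n:ℝ))^2)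
          < ENNReal.ofReal ((Real.exp 1 * (a:ℝ) / (n:ℝ)) *
              ((a:ℝ) * (1/(n:ℝ) * (1 - 1/(n:ℝ))^(n-1)))) := by
        rw [ENNReal.ofReal_lt_ofReal_iff (by positivity)]
        have hpw := expBound n hn
        have h1 : (Real.exp 1 * (a:ℝ) / (n:ℝ)) * ((a:ℝ) * (1/(n:ℝ) * (1 - 1/(n:ℝ))^(n-1)))
            = ((a:ℝ)*(a:ℝ)) * (1/(n:ℝ))^2 * (Real.exp 1 * (1 - 1/(n:ℝ))^(n-1)) := by
          field_simp
        rw [h1]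
        have h2 : ((a:ℝ)*(a:ℝ)) * (1/(n:ℝ))^2
            ≤ ((a:ℝ)*(a:ℝ)) * (1/(n:ℝ))^2 * (Real.exp 1 * (1 - 1/(n:ℝ))^(n-1)) :=
          le_mul_of_one_le_right (by positivity) hpw
        have h3 : (0:ℝ) < (1/(n:ℝ))^2 := by positivity
        nlinarith
      have hstep3 : ENNReal.ofReal ((Real.exp 1 * (a:ℝ) / (n:ℝ)) *
              ((a:ℝ) * (1/(n:ℝ) * (1 - 1/(n:ℝ))^(n-1)))) ≤ t * μ E := by
        rw [ENNReal.ofReal_mul hx0, ← htdef]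
        exact mul_le_mul_right hlowE t
      exact lt_of_le_of_lt hstep1 (lt_of_lt_of_le hstep2 hstep3)
    calc r * μ C = r * μ E + r * μ (C \ E) := by rw [hμC, mul_add]
      _ < r * μ E + t * μ E := ENNReal.add_lt_add_left
          (by
            refine ne_of_lt (lt_of_le_of_lt ?_ (lt_of_le_of_lt (le_refl (1:ℝ≥0∞)) ?_))
            · calc r * μ E ≤ 1 * 1 := mul_le_mul' hr1 prob_le_one
                _ = 1 := one_mul 1
            · exact ENNReal.one_lt_top) key
      _ = (r + t) * μ E := by rw [add_mul]
      _ = μ E := by rw [hrt, one_mul]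
end
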